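/- arXiv:0708.1374 — 8 statements merged into one kernel-verified Lean document; each statement's English description precedes it below -/
import Mathlib

section
/- For any complex numbers a, b, c, x, y with a, b, c pairwise distinct, the sum of absolute values |(x-a)(y-a)|/(|b-a||c-a|) + |(x-b)(y-b)|/(|a-b||c-b|) + |(x-c)(y-c)|/(|a-c||b-c|) is at least 1. -/
/- Both sides of the geometric inequality are moduli of terms of the Lagrange interpolation
identity for the monic quadratic `(z - x) * (z - y)` at the nodes `a, b, c`: its leading
coefficient, `1`, is the sum of its values at the nodes divided by `(a - b) * (a - c)` and its
cyclic analogues. The triangle inequality then gives the bound. -/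

theorem lagrange_sum_quadratic_eq_one {K : Type*} [Field K] {a b c : K}
    (hab : a ≠ b) (hac : a ≠ c) (hbc : b ≠ c) (x y : K) :
    (x - a) * (y - a) / ((b - a) * (c - a)) +
      (x - b) * (y - b) / ((a - b) * (c - b)) +
      (x - c) * (y - c) / ((a - c) * (b - c)) = 1 := by
  have := sub_ne_zero.2 hab
  have := sub_ne_zero.2 hac
  have := sub_ne_zero.2 hbc
  have := sub_ne_zero.2 hab.symm
  have := sub_ne_zero.2 hac.symm
  have := sub_ne_zero.2 hbc.symm
  field_simp
  ring

theorem stmt_1 (a b c x y : ℂ) (hab : a ≠ b) (hac : a ≠ c) (hbc : b ≠ c) :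
    ‖((x - a) * (y - a))‖ / (‖(b - a)‖ * ‖(c - a)‖) +
    ‖((x - b) * (y - b))‖ / (‖(a - b)‖ * ‖(c - b)‖) +
    ‖((x - c) * (y - c))‖ / (‖(a - c)‖ * ‖(b - c)‖) ≥ 1 := by
  calc (1 : ℝ)
      = ‖(x - a) * (y - a) / ((b - a) * (c - a)) + (x - b) * (y - b) / ((a - b) * (c - b)) +
          (x - c) * (y - c) / ((a - c) * (b - c))‖ := by
        rw [lagrange_sum_quadratic_eq_one hab hac hbc, norm_one]
    _ ≤ _ := norm_add₃_le.trans_eq (by simp only [norm_div, norm_mul])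
end

section
/- For any complex numbers a, b, c, x, y with a, b, c pairwise distinct, −|(x-a)(y-a)|/(|b-a||c-a|) + |(x-b)(y-b)|/(|a-b||c-b|) + |(x-c)(y-c)|/(|a-c||b-c|) ≥ −1; equivalently |(x-a)(y-a)|/(|b-a||c-a|) ≤ 1 + |(x-b)(y-b)|/(|a-b||c-b|) + |(x-c)(y-c)|/(|a-c||b-c|). -/
theorem stmt_2 (a b c x y : ℂ) (hab : a ≠ b) (hac : a ≠ c) (hbc : b ≠ c) :
    -(‖(x - a) * (y - a)‖ / (‖b - a‖ * ‖c - a‖)) +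
    ‖(x - b) * (y - b)‖ / (‖a - b‖ * ‖c - b‖) +
    ‖(x - c) * (y - c)‖ / (‖a - c‖ * ‖b - c‖) ≥ -1 := by
  have h1 : b - a ≠ 0 := sub_ne_zero.mpr hab.symm
  have h2 : c - a ≠ 0 := sub_ne_zero.mpr hac.symm
  have h3 : a - b ≠ 0 := sub_ne_zero.mpr hab
  have h4 : c - b ≠ 0 := sub_ne_zero.mpr hbc.symm
  have h5 : a - c ≠ 0 := sub_ne_zero.mpr hac
  have h6 : b - c ≠ 0 := sub_ne_zero.mpr hbc
  have key : (x - a) * (y - a) / ((b - a) * (c - a)) =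
      1 - (x - b) * (y - b) / ((a - b) * (c - b)) - (x - c) * (y - c) / ((a - c) * (b - c)) := by
    field_simp
    ring
  have habs : ‖(x - a) * (y - a) / ((b - a) * (c - a))‖ ≤
      1 + ‖(x - b) * (y - b) / ((a - b) * (c - b))‖ +
      ‖(x - c) * (y - c) / ((a - c) * (b - c))‖ := by
    rw [key]
    calc ‖1 - (x - b) * (y - b) / ((a - b) * (c - b)) - (x - c) * (y - c) / ((a - c) * (b - c))‖
        ≤ ‖1 - (x - b) * (y - b) / ((a - b) * (c - b))‖ +
          ‖(x - c) * (y - c) / ((a - c) * (b - c))‖ := norm_sub_le _ _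
      _ ≤ ‖(1 : ℂ)‖ + ‖(x - b) * (y - b) / ((a - b) * (c - b))‖ +
          ‖(x - c) * (y - c) / ((a - c) * (b - c))‖ := by
            gcongr
            exact norm_sub_le _ _
      _ = 1 + _ + _ := by rw [norm_one]
  simp only [norm_div, norm_mul] at habs ⊢
  linarith
end

section
/- Let a, b, c be pairwise distinct complex numbers and x, y complex numbers. Then equality holds in |(x-a)(y-a)|/(|b-a||c-a|) + |(x-b)(y-b)|/(|a-b||c-b|) + |(x-c)(y-c)|/(|a-c||b-c|) = 1 if and only if each of the three complex numbers (x-a)(y-a)/((b-a)(c-a)), (x-b)(y-b)/((a-b)(c-b)), (x-c)(y-c)/((a-c)(b-c)) is a nonnegative real number. -/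
theorem stmt_3 (a b c x y : ℂ) (hab : a ≠ b) (hac : a ≠ c) (hbc : b ≠ c) :
    (‖(x - a) * (y - a)‖ / (‖b - a‖ * ‖c - a‖) +
     ‖(x - b) * (y - b)‖ / (‖a - b‖ * ‖c - b‖) +
     ‖(x - c) * (y - c)‖ / (‖a - c‖ * ‖b - c‖) = 1) ↔
    ((∃ r : ℝ, 0 ≤ r ∧ (x - a) * (y - a) / ((b - a) * (c - a)) = (r : ℂ)) ∧
     (∃ r : ℝ, 0 ≤ r ∧ (x - b) * (y - b) / ((a - b) * (c - b)) = (r : ℂ)) ∧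
     (∃ r : ℝ, 0 ≤ r ∧ (x - c) * (y - c) / ((a - c) * (b - c)) = (r : ℂ))) := by
  have hba : b - a ≠ 0 := sub_ne_zero.2 (Ne.symm hab)
  have hca : c - a ≠ 0 := sub_ne_zero.2 (Ne.symm hac)
  have hab' : a - b ≠ 0 := sub_ne_zero.2 hab
  have hcb : c - b ≠ 0 := sub_ne_zero.2 (Ne.symm hbc)
  have hac' : a - c ≠ 0 := sub_ne_zero.2 hac
  have hbc' : b - c ≠ 0 := sub_ne_zero.2 hbc
  set u := (x - a) * (y - a) / ((b - a) * (c - a)) with hu_def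
  set v := (x - b) * (y - b) / ((a - b) * (c - b)) with hv_def
  set w := (x - c) * (y - c) / ((a - c) * (b - c)) with hw_def
  have hsum : u + v + w = 1 := by
    rw [hu_def, hv_def, hw_def]
    field_simp
    ring
  have h1 : ‖(x - a) * (y - a)‖ / (‖b - a‖ * ‖c - a‖)
      = ‖u‖ := by simp [hu_def, map_div₀, map_mul]
  have h2 : ‖(x - b) * (y - b)‖ / (‖a - b‖ * ‖c - b‖)
      = ‖v‖ := by simp [hv_def, map_div₀, map_mul]
  have h3 : ‖(x - c) * (y - c)‖ / (‖a - c‖ * ‖b - c‖)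
      = ‖w‖ := by simp [hw_def, map_div₀, map_mul]
  rw [h1, h2, h3]
  have key : ∀ z : ℂ, ‖z‖ = z.re → ∃ r : ℝ, 0 ≤ r ∧ z = (r : ℂ) := by
    intro z hz
    refine ⟨z.re, by rw [← hz]; exact norm_nonneg z, ?_⟩
    have him : z.im = 0 := by
      have h := Complex.sq_norm z
      rw [hz] at h
      simp [Complex.normSq_apply] at h
      nlinarith [sq_nonneg z.im]
    exact Complex.ext (by simp) (by simp [him])
  constructor
  · intro h
    have hre : u.re + v.re + w.re = 1 := by
      have : (u + v + w).re = (1 : ℂ).re := by rw [hsum]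
      simpa using this
    have lu := Complex.re_le_norm u
    have lv := Complex.re_le_norm v
    have lw := Complex.re_le_norm w
    exact ⟨key u (by linarith), key v (by linarith), key w (by linarith)⟩
  · rintro ⟨⟨r1, hr1, hu⟩, ⟨r2, hr2, hv⟩, ⟨r3, hr3, hw⟩⟩
    have hs : r1 + r2 + r3 = 1 := by
      have := hsum
      rw [hu, hv, hw] at this
      exact_mod_cast this
    rw [hu, hv, hw]
    simp only [Complex.norm_real, Real.norm_eq_abs, abs_of_nonneg hr1, abs_of_nonneg hr2, abs_of_nonneg hr3]
    exact hs
end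

section
/- For any triangle ABC with side lengths a = BC, b = CA, c = AB, and any two points X, Y in its plane, the inequality a·AX·AY + b·BX·BY + c·CX·CY ≥ a·b·c holds. -/
/-- Lagrange interpolation of `t ↦ (t - x) * (t - y)` at the nodes `a, b, c`, cleared of
denominators: its leading coefficient `1` is `∑ f(a) / ((a - b) * (a - c))`. -/
theorem cyclic_sum_sub_mul_sub_mul_sub {R : Type*} [CommRing R] (a b c x y : R) :
    (b - c) * (a - x) * (a - y) + (c - a) * (b - x) * (b - y) + (a - b) * (c - x) * (c - y) =
      -((b - c) * (c - a) * (a - b)) := by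
  ring

theorem dist_mul_dist_mul_dist_le_cyclic_sum {𝕜 : Type*} [NormedField 𝕜] (a b c x y : 𝕜) :
    dist b c * dist c a * dist a b ≤
      dist b c * dist a x * dist a y + dist c a * dist b x * dist b y +
        dist a b * dist c x * dist c y := by
  simp only [dist_eq_norm, ← norm_mul]
  calc ‖(b - c) * (c - a) * (a - b)‖
      = ‖(b - c) * (a - x) * (a - y) + (c - a) * (b - x) * (b - y) +
          (a - b) * (c - x) * (c - y)‖ := by
        rw [cyclic_sum_sub_mul_sub_mul_sub, norm_neg]
    _ ≤ _ := norm_add₃_le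

theorem stmt_7_general (a b c x y : ℂ) :
    dist b c * dist a x * dist a y + dist c a * dist b x * dist b y +
      dist a b * dist c x * dist c y ≥ dist b c * dist c a * dist a b :=
  dist_mul_dist_mul_dist_le_cyclic_sum a b c x y

theorem stmt_7 (a b c x y : ℂ) (h : ¬ Collinear ℝ ({a, b, c} : Set ℂ)) :
    dist b c * dist a x * dist a y + dist c a * dist b x * dist b y +
      dist a b * dist c x * dist c y ≥ dist b c * dist c a * dist a b :=
  stmt_7_general a b c x y
end

section
/- For any triangle ABC with side lengths a = BC, b = CA, c = AB, and any two points X, Y in its plane, the inequality −a·AX·AY + b·BX·BY + c·CX·CY ≥ −a·b·c holds; equivalently a·AX·AY ≤ a·b·c + b·BX·BY + c·CX·CY. -/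
/-! The polynomial identity
`(b-c)(a-x)(a-y) + (c-a)(b-x)(b-y) + (a-b)(c-x)(c-y) = -(b-c)(c-a)(a-b)`
(Lagrange interpolation of the quadratic `(t-x)(t-y)` at the nodes `a, b, c`)
turns the inequality into the triangle inequality for the norm of a sum of three terms. -/

theorem mul_sub_mul_sub_cyclic_sum {R : Type*} [CommRing R] (a b c x y : R) :
    (b - c) * (a - x) * (a - y) =
      -((b - c) * (c - a) * (a - b) + (c - a) * (b - x) * (b - y) +
        (a - b) * (c - x) * (c - y)) := by
  ring

theorem dist_mul_dist_mul_dist_le {K : Type*} [NormedField K] (a b c x y : K) :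
    dist b c * dist a x * dist a y ≤
      dist b c * dist c a * dist a b + dist c a * dist b x * dist b y +
        dist a b * dist c x * dist c y := by
  simp only [dist_eq_norm, ← norm_mul]
  rw [mul_sub_mul_sub_cyclic_sum, norm_neg]
  exact norm_add₃_le

theorem stmt_8_general (a b c x y : ℂ) :
    -(dist b c * dist a x * dist a y) + dist c a * dist b x * dist b y +
      dist a b * dist c x * dist c y ≥ -(dist b c * dist c a * dist a b) := by
  linarith [dist_mul_dist_mul_dist_le a b c x y]

theorem stmt_8 (a b c x y : ℂ) (h : ¬ Collinear ℝ ({a, b, c} : Set ℂ)) :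
    -(dist b c * dist a x * dist a y) + dist c a * dist b x * dist b y +
      dist a b * dist c x * dist c y ≥ -(dist b c * dist c a * dist a b) :=
  stmt_8_general a b c x y
end

section
/- Let ABC be a triangle and λ, μ, ν positive reals with λ ≥ μ + ν. Then for every point Y in the plane, λ·AY + μ·BY + ν·CY ≥ λ·0 + μ·AB + ν·AC = μ·AB + ν·AC, i.e. the function F(Y) = λ·AY + μ·BY + ν·CY attains its minimum at Y = A, with equality only at Y = A. -/
theorem weighted_dist_le_of_add_le {X : Type*} [PseudoMetricSpace X] (a b c y : X) {l m n : ℝ}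
    (hm : 0 ≤ m) (hn : 0 ≤ n) (h : m + n ≤ l) :
    m * dist a b + n * dist a c ≤ l * dist a y + m * dist b y + n * dist c y :=
  calc m * dist a b + n * dist a c
      ≤ m * (dist a y + dist b y) + n * (dist a y + dist c y) := by
        gcongr <;> exact dist_triangle_right _ _ _
    _ = (m + n) * dist a y + m * dist b y + n * dist c y := by ring
    _ ≤ l * dist a y + m * dist b y + n * dist c y := by gcongr

theorem stmt_10_general (a b c : EuclideanSpace ℝ (Fin 2)) (l m n : ℝ)
    (hm : 0 < m) (hn : 0 < n) (h : m + n ≤ l)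
    (y : EuclideanSpace ℝ (Fin 2)) :
    l * dist a y + m * dist b y + n * dist c y ≥ m * dist a b + n * dist a c :=
  weighted_dist_le_of_add_le a b c y hm.le hn.le h

theorem stmt_10 (a b c : EuclideanSpace ℝ (Fin 2)) (l m n : ℝ)
    (hl : 0 < l) (hm : 0 < m) (hn : 0 < n) (h : m + n ≤ l)
    (y : EuclideanSpace ℝ (Fin 2)) :
    l * dist a y + m * dist b y + n * dist c y ≥ m * dist a b + n * dist a c :=
  stmt_10_general a b c l m n hm hn h y
end

section
/- Let ABC be a triangle and λ, μ, ν positive reals with λ ≥ μ + ν. Then Y = A is the unique minimizer of F(Y) = λ·AY + μ·BY + ν·CY: for every Y ≠ A, F(Y) > F(A). -/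
/-!
Adding the triangle inequalities `AB ≤ AY + YB` and `AC ≤ AY + YC` with weights `μ` and `ν` gives
`F(A) ≤ (μ + ν)·AY + μ·BY + ν·CY ≤ F(Y)`. Equality throughout would force `Y` onto both
segments `AB` and `AC`; as `Y ≠ A`, the three vertices would then lie on the line `AY`.
-/

theorem dist_add_dist_eq_of_weighted_dist_le {α : Type*} [PseudoMetricSpace α] {a b c y : α}
    {l m n : ℝ} (hm : 0 < m) (hn : 0 < n) (h : m + n ≤ l)
    (hle : l * dist a y + m * dist b y + n * dist c y ≤ m * dist a b + n * dist a c) :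
    dist a y + dist y b = dist a b ∧ dist a y + dist y c = dist a c := by
  have hab := dist_triangle a y b
  have hac := dist_triangle a y c
  have hl : (m + n) * dist a y ≤ l * dist a y := mul_le_mul_of_nonneg_right h dist_nonneg
  rw [dist_comm b y, dist_comm c y] at hle
  constructor <;> nlinarith

theorem collinear_of_wbtw_of_wbtw {R V P : Type*} [Field R] [LinearOrder R] [IsStrictOrderedRing R]
    [AddCommGroup V] [Module R V] [AddTorsor V P] {a b c y : P}
    (hb : Wbtw R a y b) (hc : Wbtw R a y c) (hy : y ≠ a) : Collinear R ({a, b, c} : Set P) := by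
  have hb' : b ∈ line[R, a, y] :=
    hb.collinear.mem_affineSpan_of_mem_of_ne (by simp) (by simp) (by simp) hy.symm
  have hc' : c ∈ line[R, a, y] :=
    hc.collinear.mem_affineSpan_of_mem_of_ne (by simp) (by simp) (by simp) hy.symm
  exact (collinear_insert_insert_of_mem_affineSpan_pair hb' hc').subset
    (by intro x; simp only [Set.mem_insert_iff, Set.mem_singleton_iff]; tauto)

theorem stmt_11_general (a b c : EuclideanSpace ℝ (Fin 2)) (l m n : ℝ)
    (hnc : ¬ Collinear ℝ ({a, b, c} : Set (EuclideanSpace ℝ (Fin 2))))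
    (hm : 0 < m) (hn : 0 < n) (h : m + n ≤ l)
    (y : EuclideanSpace ℝ (Fin 2)) (hy : y ≠ a) :
    l * dist a y + m * dist b y + n * dist c y > m * dist a b + n * dist a c := by
  by_contra hle
  obtain ⟨hb, hc⟩ := dist_add_dist_eq_of_weighted_dist_le hm hn h (not_lt.1 hle)
  exact hnc (collinear_of_wbtw_of_wbtw (dist_add_dist_eq_iff.1 hb) (dist_add_dist_eq_iff.1 hc) hy)

theorem stmt_11 (a b c : EuclideanSpace ℝ (Fin 2)) (l m n : ℝ)
    (hnc : ¬ Collinear ℝ ({a, b, c} : Set (EuclideanSpace ℝ (Fin 2))))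
    (hl : 0 < l) (hm : 0 < m) (hn : 0 < n) (h : m + n ≤ l)
    (y : EuclideanSpace ℝ (Fin 2)) (hy : y ≠ a) :
    l * dist a y + m * dist b y + n * dist c y > m * dist a b + n * dist a c :=
  stmt_11_general a b c l m n hnc hm hn h y hy
end

section
/- For any triangle ABC inscribed in a circle of radius R, and any point M in the plane, the pedal triangle A₁B₁C₁ of M (feet of perpendiculars from M to lines BC, CA, AB) has side lengths B₁C₁ = (a/(2R))·AM, C₁A₁ = (b/(2R))·BM, A₁B₁ = (c/(2R))·CM, where a = BC, b = CA, c = AB. -/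
/-!
Three vectors in a plane have a vanishing Gram determinant. Applied to `M - A`, `B - A`, `C - A`,
where `B₁ - A` and `C₁ - A` are the projections of `M - A` onto the sides through `A`, this gives
`B₁C₁ = AM · sin A`. Applied to `O - A`, `B - A`, `C - A`, where `⟪O - A, B - A⟫ = AB² / 2` because
`OA = OB`, it gives the extended law of sines `BC = 2R · sin A`.
-/

open EuclideanGeometry RealInnerProductSpace Module InnerProductGeometry Real

theorem Matrix.det_gram_eq_zero_of_finrank_lt {𝕜 E n : Type*} [RCLike 𝕜] [NormedAddCommGroup E]
    [InnerProductSpace 𝕜 E] [FiniteDimensional 𝕜 E] [Fintype n] [DecidableEq n] (v : n → E)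
    (h : finrank 𝕜 E < Fintype.card n) : (Matrix.gram 𝕜 v).det = 0 := by
  by_contra hdet
  exact h.not_ge (linearIndependent_of_det_gram_ne_zero hdet).fintype_card_le_finrank

namespace InnerProductGeometry

variable {V : Type*} [NormedAddCommGroup V] [InnerProductSpace ℝ V]

theorem sin_angle_mul_norm_mul_norm_sq (e f : V) :
    (sin (angle e f) * (‖e‖ * ‖f‖)) ^ 2 = ⟪e, e⟫ * ⟪f, f⟫ - ⟪e, f⟫ ^ 2 := by
  rw [real_inner_self_eq_norm_sq, real_inner_self_eq_norm_sq, ← cos_angle_mul_norm_mul_norm]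
  linear_combination (‖e‖ * ‖f‖) ^ 2 * sin_sq_add_cos_sq (angle e f)

variable [FiniteDimensional ℝ V]

theorem inner_self_mul_sub_inner_sq_of_finrank_le_two (hV : finrank ℝ V ≤ 2) (w e f : V) :
    ⟪w, w⟫ * (⟪e, e⟫ * ⟪f, f⟫ - ⟪e, f⟫ ^ 2)
      = ⟪w, e⟫ ^ 2 * ⟪f, f⟫ - 2 * ⟪w, e⟫ * ⟪w, f⟫ * ⟪e, f⟫ + ⟪w, f⟫ ^ 2 * ⟪e, e⟫ := by
  have h := Matrix.det_gram_eq_zero_of_finrank_lt (𝕜 := ℝ) ![w, e, f] (by simp; omega)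
  simp only [Matrix.det_fin_three, Matrix.gram_apply, Matrix.cons_val_zero, Matrix.cons_val_one,
    Matrix.cons_val_two, Matrix.head_cons, Matrix.tail_cons] at h
  rw [real_inner_comm w e, real_inner_comm w f, real_inner_comm e f] at h
  linear_combination h

theorem norm_smul_sub_smul_eq_norm_mul_sin_angle (hV : finrank ℝ V ≤ 2) {w e f : V} {t s : ℝ}
    (he : e ≠ 0) (hf : f ≠ 0) (ht : ⟪w - t • e, e⟫ = 0) (hs : ⟪w - s • f, f⟫ = 0) :
    ‖t • e - s • f‖ = ‖w‖ * sin (angle e f) := by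
  have hef : (‖e‖ * ‖f‖) ^ 2 ≠ 0 := by positivity
  have hgram := inner_self_mul_sub_inner_sq_of_finrank_le_two hV w e f
  rw [← sin_angle_mul_norm_mul_norm_sq] at hgram
  simp only [inner_sub_left, inner_smul_left, real_inner_self_eq_norm_sq, conj_trivial]
    at ht hs hgram
  refine (pow_left_inj₀ (norm_nonneg _)
    (mul_nonneg (norm_nonneg _) (sin_angle_nonneg e f)) two_ne_zero).1 (mul_right_cancel₀ hef ?_)
  rw [norm_sub_sq_real, norm_smul, norm_smul, inner_smul_left, inner_smul_right, conj_trivial]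
  simp only [mul_pow, Real.norm_eq_abs, sq_abs]
  linear_combination -hgram - (‖f‖ ^ 2 * (⟪w, e⟫ + t * ‖e‖ ^ 2) - 2 * ⟪e, f⟫ * ⟪w, f⟫) * ht
    - (‖e‖ ^ 2 * (⟪w, f⟫ + s * ‖f‖ ^ 2) - 2 * ⟪e, f⟫ * t * ‖e‖ ^ 2) * hs

theorem norm_sub_eq_two_mul_norm_mul_sin_angle (hV : finrank ℝ V ≤ 2) {g e f : V} (he : e ≠ 0)
    (hf : f ≠ 0) (hge : ‖g - e‖ = ‖g‖) (hgf : ‖g - f‖ = ‖g‖) :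
    ‖e - f‖ = 2 * ‖g‖ * sin (angle e f) := by
  have hef : (‖e‖ * ‖f‖) ^ 2 ≠ 0 := by positivity
  have hgram := inner_self_mul_sub_inner_sq_of_finrank_le_two hV g e f
  rw [← sin_angle_mul_norm_mul_norm_sq, real_inner_self_eq_norm_sq, real_inner_self_eq_norm_sq,
    real_inner_self_eq_norm_sq] at hgram
  have he' := congrArg (· ^ 2) hge
  have hf' := congrArg (· ^ 2) hgf
  simp only [norm_sub_sq_real] at he' hf'
  refine (pow_left_inj₀ (norm_nonneg _)
    (mul_nonneg (by positivity) (sin_angle_nonneg e f)) two_ne_zero).1 (mul_right_cancel₀ hef ?_)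
  rw [norm_sub_sq_real]
  linear_combination -4 * hgram + (‖f‖ ^ 2 * (2 * ⟪g, e⟫ + ‖e‖ ^ 2) - 4 * ⟪e, f⟫ * ⟪g, f⟫) * he'
    + (‖e‖ ^ 2 * (2 * ⟪g, f⟫ + ‖f‖ ^ 2) - 2 * ⟪e, f⟫ * ‖e‖ ^ 2) * hf'

end InnerProductGeometry

namespace EuclideanGeometry

variable {V P : Type*} [NormedAddCommGroup V] [InnerProductSpace ℝ V] [FiniteDimensional ℝ V]
  [MetricSpace P] [NormedAddTorsor V P]

theorem dist_eq_two_mul_mul_sin_angle (hV : finrank ℝ V ≤ 2) {a b c o : P} {R : ℝ}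
    (hab : a ≠ b) (hac : a ≠ c) (hoa : dist o a = R) (hob : dist o b = R) (hoc : dist o c = R) :
    dist b c = 2 * R * sin (∠ b a c) := by
  subst hoa
  rw [dist_eq_norm_vsub V, dist_eq_norm_vsub V] at *
  rw [← vsub_sub_vsub_cancel_right b c a]
  refine norm_sub_eq_two_mul_norm_mul_sin_angle hV (vsub_ne_zero.2 hab.symm)
    (vsub_ne_zero.2 hac.symm) ?_ ?_ <;>
  rwa [vsub_sub_vsub_cancel_right]

theorem dist_pedal_eq_dist_mul_sin_angle (hV : finrank ℝ V ≤ 2) {a b c m p q : P}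
    (hab : a ≠ b) (hac : a ≠ c)
    (hp : p ∈ line[ℝ, c, a]) (hp' : ⟪m -ᵥ p, a -ᵥ c⟫ = 0)
    (hq : q ∈ line[ℝ, a, b]) (hq' : ⟪m -ᵥ q, b -ᵥ a⟫ = 0) :
    dist p q = dist a m * sin (∠ b a c) := by
  obtain ⟨t, rfl⟩ := mem_affineSpan_pair_iff_exists_lineMap_rev_eq.1 hp
  obtain ⟨s, rfl⟩ := mem_affineSpan_pair_iff_exists_lineMap_eq.1 hq
  rw [angle_comm, EuclideanGeometry.angle, dist_comm a m, dist_eq_norm_vsub V, dist_eq_norm_vsub V,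
    ← vsub_sub_vsub_cancel_right _ _ a]
  simp only [AffineMap.lineMap_apply, vadd_vsub]
  refine norm_smul_sub_smul_eq_norm_mul_sin_angle hV (vsub_ne_zero.2 hac.symm)
    (vsub_ne_zero.2 hab.symm) ?_ ?_
  · rw [← neg_vsub_eq_vsub_rev c a, inner_neg_right, neg_eq_zero] at hp'
    simpa only [AffineMap.lineMap_apply, vsub_vadd_eq_vsub_sub] using hp'
  · simpa only [AffineMap.lineMap_apply, vsub_vadd_eq_vsub_sub] using hq'

theorem dist_pedal_eq_dist_div_two_mul_mul_dist (hV : finrank ℝ V ≤ 2) {a b c m o p q : P}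
    {R : ℝ} (hab : a ≠ b) (hac : a ≠ c)
    (hoa : dist o a = R) (hob : dist o b = R) (hoc : dist o c = R)
    (hp : p ∈ line[ℝ, c, a]) (hp' : ⟪m -ᵥ p, a -ᵥ c⟫ = 0)
    (hq : q ∈ line[ℝ, a, b]) (hq' : ⟪m -ᵥ q, b -ᵥ a⟫ = 0) :
    dist p q = dist b c / (2 * R) * dist a m := by
  have hR : R ≠ 0 := by
    rintro rfl
    exact hab ((dist_eq_zero.1 hoa).symm.trans (dist_eq_zero.1 hob))
  rw [dist_pedal_eq_dist_mul_sin_angle hV hab hac hp hp' hq hq',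
    dist_eq_two_mul_mul_sin_angle hV hab hac hoa hob hoc]
  field_simp

end EuclideanGeometry

theorem stmt_12 (a b c m a₁ b₁ c₁ o : EuclideanSpace ℝ (Fin 2)) (R : ℝ)
    (hnc : ¬ Collinear ℝ ({a, b, c} : Set (EuclideanSpace ℝ (Fin 2))))
    (hoa : dist o a = R) (hob : dist o b = R) (hoc : dist o c = R)
    (ha₁ : a₁ ∈ affineSpan ℝ ({b, c} : Set (EuclideanSpace ℝ (Fin 2))))
    (ha₁' : ⟪m - a₁, c - b⟫ = 0)
    (hb₁ : b₁ ∈ affineSpan ℝ ({c, a} : Set (EuclideanSpace ℝ (Fin 2))))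
    (hb₁' : ⟪m - b₁, a - c⟫ = 0)
    (hc₁ : c₁ ∈ affineSpan ℝ ({a, b} : Set (EuclideanSpace ℝ (Fin 2))))
    (hc₁' : ⟪m - c₁, b - a⟫ = 0) :
    dist b₁ c₁ = dist b c / (2 * R) * dist a m ∧
    dist c₁ a₁ = dist c a / (2 * R) * dist b m ∧
    dist a₁ b₁ = dist a b / (2 * R) * dist c m := by
  have hV : finrank ℝ (EuclideanSpace ℝ (Fin 2)) ≤ 2 := finrank_euclideanSpace_fin.le
  have hab := ne₁₂_of_not_collinear hnc
  have hac := ne₁₃_of_not_collinear hnc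
  have hbc := ne₂₃_of_not_collinear hnc
  exact ⟨dist_pedal_eq_dist_div_two_mul_mul_dist hV hab hac hoa hob hoc hb₁ hb₁' hc₁ hc₁',
    dist_pedal_eq_dist_div_two_mul_mul_dist hV hbc hab.symm hob hoc hoa hc₁ hc₁' ha₁ ha₁',
    dist_pedal_eq_dist_div_two_mul_mul_dist hV hac.symm hbc.symm hoc hoa hob ha₁ ha₁' hb₁ hb₁'⟩
end
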